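/- Let F be a field of characteristic 0, let Γ be a finitely generated subgroup of GL_n(F), and let f be a polynomial function on GL_n(F) (a polynomial in the n² matrix entries and the inverse of the determinant) such that f(γ₀) ≠ 0 for some γ₀ ∈ Γ. Then there exists N ≥ 1, depending only on Γ and f, such that for every finite generating set S of Γ there exists γ ∈ B_S(N) with f(γ) ≠ 0. -/

import Mathlib

/-!
The right translates `x ↦ f (x * g)` of a polynomial function `f` on `GL_n` are polynomial
functions of the same degree, so they all lie in one finite-dimensional space `U`. For a
generating set `S`, let `W k` be the span of the translates of `f` by the ball of radius `k`.
This increasing chain inside `U` stops growing at some `k ≤ dim U`; from then on `W k` is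
invariant under translation by `S ∪ S⁻¹`, hence by the whole group, so it contains the translate
of `f` by `γ₀`, which does not vanish at `1`. Therefore not all translates of `f` by the ball of
radius `dim U` vanish at `1`, i.e. `f` does not vanish on that ball.
-/

/-- The ball of radius `n` in the word metric on a group with respect to a finite set `S`:
the set of elements expressible as a product of at most `n` elements of `S ∪ S⁻¹`. -/
def wordBall {G : Type*} [Group G] (S : Finset G) (n : ℕ) : Set G :=
  {x | ∃ l : List G, l.length ≤ n ∧ (∀ y ∈ l, y ∈ S ∨ y⁻¹ ∈ S) ∧ l.prod = x}

/-- `S` is a (finite) generating set of the group `G`. -/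
def Generates {G : Type*} [Group G] (S : Finset G) : Prop :=
  Subgroup.closure (S : Set G) = ⊤

/-- Evaluation of a polynomial in the `n²` matrix entries and the inverse of the determinant
(a polynomial function on `GL_n`) at an element of `GL_n(F)`. -/
noncomputable def evalGL {n : ℕ} {F : Type*} [Field F]
    (p : MvPolynomial ((Fin n × Fin n) ⊕ Unit) F)
    (M : Matrix.GeneralLinearGroup (Fin n) F) : F :=
  MvPolynomial.eval
    (Sum.elim (fun ij : Fin n × Fin n => (M : Matrix (Fin n) (Fin n) F) ij.1 ij.2)
      (fun _ => ((M : Matrix (Fin n) (Fin n) F).det)⁻¹)) p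

open MvPolynomial Module

section WordBall

variable {G : Type*} [Group G] {S : Finset G}

lemma wordBall_mono {k m : ℕ} (h : k ≤ m) : wordBall S k ⊆ wordBall S m :=
  fun _ ⟨l, hl, hlS, hlx⟩ => ⟨l, hl.trans h, hlS, hlx⟩

lemma one_mem_wordBall (k : ℕ) : (1 : G) ∈ wordBall S k :=
  ⟨[], by simp, by simp, rfl⟩

lemma mul_mem_wordBall_succ {y x : G} {k : ℕ} (hy : y ∈ S ∨ y⁻¹ ∈ S)
    (hx : x ∈ wordBall S k) : y * x ∈ wordBall S (k + 1) := by
  obtain ⟨l, hl, hlS, rfl⟩ := hx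
  refine ⟨y :: l, by simpa using hl, ?_, List.prod_cons⟩
  simpa [hy] using hlS

end WordBall

theorem exists_le_finrank_eq_succ_of_monotone {K V : Type*} [DivisionRing K] [AddCommGroup V]
    [Module K V] {U : Submodule K V} [FiniteDimensional K U] {W : ℕ → Submodule K V}
    (hW : Monotone W) (hWU : ∀ k, W k ≤ U) :
    ∃ k ≤ finrank K U, W k = W (k + 1) := by
  by_contra! hne
  have hfin : ∀ k, FiniteDimensional K (W k) :=
    fun k => Submodule.finiteDimensional_of_le (hWU k)
  have hgrow : ∀ k ≤ finrank K U + 1, k ≤ finrank K (W k) := by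
    intro k
    induction k with
    | zero => simp
    | succ k ih =>
      intro hk
      have hlt : W k < W (k + 1) := (hW k.le_succ).lt_of_ne (hne k (by omega))
      have := Submodule.finrank_lt_finrank_of_lt hlt
      have := ih (by omega)
      omega
  have := hgrow _ le_rfl
  have := Submodule.finrank_mono (hWU (finrank K U + 1))
  omega

section BallSpan

variable {F G V : Type*} [CommSemiring F] [Group G] [AddCommMonoid V] [Module F V]
  (ρ : Representation F G V) (S : Finset G) (v : V)

def ballSpan (k : ℕ) : Submodule F V :=
  Submodule.span F ((ρ · v) '' wordBall S k)

variable {ρ S v}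

lemma apply_mem_ballSpan {g : G} {k : ℕ} (hg : g ∈ wordBall S k) :
    ρ g v ∈ ballSpan ρ S v k :=
  Submodule.subset_span ⟨g, hg, rfl⟩

lemma ballSpan_mono : Monotone (ballSpan ρ S v) :=
  fun _ _ h => Submodule.span_mono (Set.image_mono (wordBall_mono h))

lemma map_ballSpan_le {y : G} (hy : y ∈ S ∨ y⁻¹ ∈ S) (k : ℕ) :
    (ballSpan ρ S v k).map (ρ y) ≤ ballSpan ρ S v (k + 1) := by
  rw [ballSpan, Submodule.map_span_le]
  rintro _ ⟨g, hg, rfl⟩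
  rw [← Module.End.mul_apply, ← map_mul]
  exact apply_mem_ballSpan (mul_mem_wordBall_succ hy hg)

lemma ballSpan_mem_invtSubmodule {k : ℕ} (hS : Generates S)
    (hk : ballSpan ρ S v k = ballSpan ρ S v (k + 1)) :
    ballSpan ρ S v k ∈ ρ.invtSubmodule := by
  have hgen : ∀ y, y ∈ S ∨ y⁻¹ ∈ S → ballSpan ρ S v k ∈ Module.End.invtSubmodule (ρ y) :=
    fun y hy =>
      (Module.End.mem_invtSubmodule_iff_map_le _).2 ((map_ballSpan_le hy k).trans hk.ge)
  refine ρ.mem_invtSubmodule.2 fun g => ?_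
  have hg : g ∈ Subgroup.closure (S : Set G) := hS ▸ Subgroup.mem_top g
  induction hg using Subgroup.closure_induction'' with
  | mem x hx => exact hgen x (Or.inl hx)
  | inv_mem x hx => exact hgen x⁻¹ (Or.inr (by simpa using hx))
  | one => simp
  | mul x y _ _ hx hy =>
    rw [map_mul, Module.End.mul_eq_comp]
    exact Module.End.invtSubmodule.comp _ hx hy

lemma apply_mem_ballSpan_of_eq_succ {k : ℕ} (hS : Generates S)
    (hk : ballSpan ρ S v k = ballSpan ρ S v (k + 1)) (g : G) : ρ g v ∈ ballSpan ρ S v k := by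
  have hv : v ∈ ballSpan ρ S v k := by
    simpa using apply_mem_ballSpan (ρ := ρ) (v := v) (one_mem_wordBall k)
  exact (ρ.mem_invtSubmodule.1 (ballSpan_mem_invtSubmodule hS hk) g) hv

end BallSpan

section RightTranslation

variable (F G : Type*) [CommSemiring F] [Monoid G]

def rightTranslation : Representation F G (G → F) where
  toFun g := LinearMap.funLeft F F (· * g)
  map_one' := by ext; simp
  map_mul' a b := by ext; simp [mul_assoc]

variable {F G}

@[simp]
lemma rightTranslation_apply (g : G) (f : G → F) (x : G) :
    rightTranslation F G g f x = f (x * g) :=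
  rfl

lemma rightTranslation_comp {H : Type*} [Monoid H] (φ : H →* G) (h : H) (f : G → F) :
    rightTranslation F H h (f ∘ φ) =
      LinearMap.funLeft F F φ (rightTranslation F G (φ h) f) := by
  ext; simp

end RightTranslation

theorem exists_mem_wordBall_ne_zero_of_rightTranslation_mem {F G : Type*} [Field F] [Group G]
    {f : G → F} (U : Submodule F (G → F)) [FiniteDimensional F U]
    (hU : ∀ g, rightTranslation F G g f ∈ U) {γ₀ : G} (hγ₀ : f γ₀ ≠ 0) :
    ∃ N : ℕ, 1 ≤ N ∧ ∀ S : Finset G, Generates S → ∃ γ ∈ wordBall S N, f γ ≠ 0 := by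
  have hfU : f ∈ U := by simpa using hU 1
  have hf : f ≠ 0 := fun h => hγ₀ (by simp [h])
  refine ⟨finrank F U, Submodule.one_le_finrank_iff.2 ((Submodule.ne_bot_iff U).2 ⟨f, hfU, hf⟩),
    fun S hS => ?_⟩
  have hWU : ∀ k, ballSpan (rightTranslation F G) S f k ≤ U :=
    fun k => Submodule.span_le.2 (by rintro _ ⟨g, -, rfl⟩; exact hU g)
  obtain ⟨k, hkN, hk⟩ := exists_le_finrank_eq_succ_of_monotone ballSpan_mono hWU
  have hγ₀_mem :
      rightTranslation F G γ₀ f ∈ ballSpan (rightTranslation F G) S f (finrank F U) :=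
    ballSpan_mono hkN (apply_mem_ballSpan_of_eq_succ hS hk γ₀)
  by_contra! hvanish
  have hker : ballSpan (rightTranslation F G) S f (finrank F U) ≤
      LinearMap.ker (LinearMap.proj (R := F) (φ := fun _ : G => F) 1) :=
    Submodule.span_le.2 (by rintro _ ⟨g, hg, rfl⟩; simpa using hvanish g hg)
  exact hγ₀ (by simpa using hker hγ₀_mem)

theorem MvPolynomial.totalDegree_bind₁_le {σ τ R : Type*} [CommSemiring R]
    {g : σ → MvPolynomial τ R} {d : ℕ} (hg : ∀ i, (g i).totalDegree ≤ d)
    (p : MvPolynomial σ R) :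
    (bind₁ g p).totalDegree ≤ p.totalDegree * d := by
  conv_lhs => rw [p.as_sum, map_sum]
  refine (totalDegree_finsetSum _ _).trans (Finset.sup_le fun m hm => ?_)
  rw [bind₁_monomial]
  calc (C (coeff m p) * ∏ i ∈ m.support, g i ^ m i).totalDegree
      ≤ (C (coeff m p) : MvPolynomial τ R).totalDegree
        + ∑ i ∈ m.support, (g i ^ m i).totalDegree :=
        (totalDegree_mul _ _).trans (Nat.add_le_add_left (totalDegree_finsetProd _ _) _)
    _ ≤ 0 + ∑ i ∈ m.support, m i * d := by
        rw [totalDegree_C]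
        exact Nat.add_le_add_left (Finset.sum_le_sum fun i _ =>
          (totalDegree_pow _ _).trans (Nat.mul_le_mul_left _ (hg i))) _
    _ ≤ p.totalDegree * d := by
        rw [zero_add, ← Finset.sum_mul]
        exact Nat.mul_le_mul_right _ (le_totalDegree hm)

section GeneralLinearGroup

variable {n : ℕ} {F : Type*} [Field F]

noncomputable def mulRightSubst (g : GL (Fin n) F) :
    (Fin n × Fin n) ⊕ Unit → MvPolynomial ((Fin n × Fin n) ⊕ Unit) F :=
  Sum.elim (fun ij => ∑ k, C ((g : Matrix (Fin n) (Fin n) F) k ij.2) * X (Sum.inl (ij.1, k)))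
    fun _ => C (g : Matrix (Fin n) (Fin n) F).det⁻¹ * X (Sum.inr ())

lemma totalDegree_mulRightSubst_le (g : GL (Fin n) F) (i : (Fin n × Fin n) ⊕ Unit) :
    (mulRightSubst g i).totalDegree ≤ 1 := by
  rcases i with ij | u <;> simp only [mulRightSubst, Sum.elim_inl, Sum.elim_inr]
  · refine (totalDegree_finsetSum _ _).trans (Finset.sup_le fun k _ => ?_)
    exact (totalDegree_mul _ _).trans (by simp)
  · exact (totalDegree_mul _ _).trans (by simp)

lemma evalGL_bind₁_mulRightSubst (g M : GL (Fin n) F)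
    (p : MvPolynomial ((Fin n × Fin n) ⊕ Unit) F) :
    evalGL (bind₁ (mulRightSubst g) p) M = evalGL p (M * g) := by
  refine (eval₂Hom_bind₁ _ _ _ p).trans (congrArg (eval · p) ?_)
  ext (⟨i, j⟩ | u)
  · simp [mulRightSubst, Matrix.mul_apply, mul_comm]
  · simp [mulRightSubst, Matrix.det_mul, mul_comm]

noncomputable def evalGLLinearMap :
    MvPolynomial ((Fin n × Fin n) ⊕ Unit) F →ₗ[F] (GL (Fin n) F → F) where
  toFun p M := evalGL p M
  map_add' p q := by ext; simp [evalGL]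
  map_smul' c p := by ext; simp [evalGL, smul_eq_C_mul]

lemma rightTranslation_evalGL_mem (p : MvPolynomial ((Fin n × Fin n) ⊕ Unit) F)
    (g : GL (Fin n) F) :
    rightTranslation F _ g (evalGL p) ∈
      (restrictTotalDegree _ F p.totalDegree).map evalGLLinearMap := by
  refine ⟨bind₁ (mulRightSubst g) p, ?_, ?_⟩
  · simpa [mem_restrictTotalDegree] using totalDegree_bind₁_le (totalDegree_mulRightSubst_le g) p
  · ext M
    exact evalGL_bind₁_mulRightSubst g M p

end GeneralLinearGroup

theorem exists_uniform_radius_escaping_subvariety_general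
    {n : ℕ} {F : Type*} [Field F]
    (Γ : Subgroup (Matrix.GeneralLinearGroup (Fin n) F))
    (p : MvPolynomial ((Fin n × Fin n) ⊕ Unit) F)
    (γ₀ : Γ) (hγ₀ : evalGL p (γ₀ : Matrix.GeneralLinearGroup (Fin n) F) ≠ 0) :
    ∃ N : ℕ, 1 ≤ N ∧ ∀ S : Finset Γ, Generates S →
      ∃ γ ∈ wordBall S N, evalGL p (γ : Matrix.GeneralLinearGroup (Fin n) F) ≠ 0 := by
  let U := ((restrictTotalDegree _ F p.totalDegree).map evalGLLinearMap).map
    (LinearMap.funLeft F F Γ.subtype)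
  refine exists_mem_wordBall_ne_zero_of_rightTranslation_mem (f := evalGL p ∘ Γ.subtype) U
    (fun g => ?_) hγ₀
  rw [rightTranslation_comp]
  exact Submodule.mem_map_of_mem (rightTranslation_evalGL_mem p g)

/-- If a polynomial function on `GL_n(F)` does not vanish identically on a finitely generated
subgroup `Γ`, then there is an `N ≥ 1`, depending only on `Γ` and the polynomial, such that for
every finite generating set `S` of `Γ` the ball of radius `N` contains a point where the
polynomial does not vanish. -/
theorem exists_uniform_radius_escaping_subvariety
    {n : ℕ} {F : Type*} [Field F] [CharZero F]
    (Γ : Subgroup (Matrix.GeneralLinearGroup (Fin n) F)) (hfg : Group.FG Γ)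
    (p : MvPolynomial ((Fin n × Fin n) ⊕ Unit) F)
    (γ₀ : Γ) (hγ₀ : evalGL p (γ₀ : Matrix.GeneralLinearGroup (Fin n) F) ≠ 0) :
    ∃ N : ℕ, 1 ≤ N ∧ ∀ S : Finset Γ, Generates S →
      ∃ γ ∈ wordBall S N, evalGL p (γ : Matrix.GeneralLinearGroup (Fin n) F) ≠ 0 :=
  exists_uniform_radius_escaping_subvariety_general Γ p γ₀ hγ₀
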